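/- Let n, k, d be positive integers and ε > 0, ε′ > 0, δ > 0, 0 ≤ δ′ ≤ 1 reals. Suppose S is a pseudorandom generation steward with randomness complexity m that is a one-query (ε′,δ′)-steward for k adaptively chosen (ε,δ)-concentrated functions f : {0,1}^n → ℝ^d. Then m ≥ (1−δ′)·(n − log₂(2/δ))·k. -/

import Mathlib

/-!
The owner plays adaptively against the set `A` of seeds that are consistent with the answers
seen so far. Its next function reveals the query point exactly, except on the at most
`t = ⌊δ 2ⁿ⌋` points whose fibre under the steward's query map holds more than a `1/t` fraction
of `A`; there it takes a value that makes the steward fail. Such a function is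
`(ε, δ)`-concentrated, and along a seed on which the steward never fails the consistent set
shrinks by a factor `t` in every round while still containing the seed, so `t ^ k ≤ 2 ^ m`.
When `δ' < 1` such a seed exists, and `log₂ t ≥ n - log₂ (2 / δ)`.
-/

open Classical

/-- Probability of `P` under the uniform distribution on a finite type. -/
noncomputable def pr {α : Type*} [Fintype α] (P : α → Prop) : ℝ :=
  ((Finset.univ.filter P).card : ℝ) / (Fintype.card α : ℝ)

/-- `f : {0,1}^n → ℝ^d` is `(ε,δ)`-concentrated at `μ`. -/
def Concentrated (n d : ℕ) (ε δ : ℝ)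
    (f : (Fin n → Bool) → Fin d → ℝ) (μ : Fin d → ℝ) : Prop :=
  pr (fun X : Fin n → Bool => ∃ j, |f X j - μ j| > ε) ≤ δ

/-- A deterministic owner for `k` rounds of `(ε,δ)`-concentrated functions
`{0,1}^n → ℝ^d`: given the history of responses `Y_1,…,Y_{i-1}`, it produces
a function `f_i` together with a point `μ_i` at which `f_i` is concentrated. -/
structure Owner (n k d : ℕ) (ε δ : ℝ) where
  act : List (Fin d → ℝ) → (((Fin n → Bool) → Fin d → ℝ) × (Fin d → ℝ))
  conc : ∀ ys : List (Fin d → ℝ), ys.length < k →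
    Concentrated n d ε δ (act ys).1 (act ys).2

/-- A one-query steward with randomness complexity `m`: in each round it chooses
a query point from its randomness and the past query answers, and it chooses a
response from its randomness and the past and current query answers. -/
structure Steward (n k d m : ℕ) where
  q : (Fin m → Bool) → List (Fin d → ℝ) → (Fin n → Bool)
  r : (Fin m → Bool) → List (Fin d → ℝ) → (Fin d → ℝ) → (Fin d → ℝ)

/-- The interaction `O ↔ S(Z)` for `i` rounds: the list of triples `(Y_i, W_i, μ_i)`. -/
noncomputable def run {n k d m : ℕ} {ε δ : ℝ} (O : Owner n k d ε δ) (S : Steward n k d m)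
    (Z : Fin m → Bool) : ℕ → List ((Fin d → ℝ) × (Fin d → ℝ) × (Fin d → ℝ))
  | 0 => []
  | i + 1 =>
    let h := run O S Z i
    let fμ := O.act (h.map fun p => p.1)
    let X := S.q Z (h.map fun p => p.2.1)
    let W := fμ.1 X
    h ++ [(S.r Z (h.map fun p => p.2.1) W, W, fμ.2)]

/-- `S` is a one-query `(ε',δ')`-steward for `k` adaptively chosen
`(ε,δ)`-concentrated functions `{0,1}^n → ℝ^d`. -/
def IsSteward (n k d m : ℕ) (ε δ ε' δ' : ℝ) (S : Steward n k d m) : Prop :=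
  ∀ O : Owner n k d ε δ,
    pr (fun Z : Fin m → Bool =>
      ∃ p ∈ run O S Z k, ∃ j : Fin d, |p.1 j - p.2.2 j| > ε') ≤ δ'

open Finset

section Counting

variable {α β : Type*} [Fintype α]

noncomputable def heavyFibers (t : ℕ) (A : Finset β) (q : β → α) : Finset α :=
  univ.filter fun x => #A < t * #(A.filter (q · = x))

lemma card_heavyFibers_le (t : ℕ) (A : Finset β) (q : β → α) : #(heavyFibers t A q) ≤ t := by
  set H := heavyFibers t A q
  rcases Nat.eq_zero_or_pos #A with hA | hA
  · simp [H, heavyFibers, card_eq_zero.1 hA]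
  have hsum : ∑ x ∈ H, #(A.filter (q · = x)) ≤ #A := by
    rw [card_eq_sum_card_fiberwise (f := q) (t := univ) fun _ _ => mem_coe.2 (mem_univ _)]
    exact sum_le_sum_of_subset (subset_univ H)
  refine Nat.le_of_mul_le_mul_right ?_ hA
  calc #H * #A ≤ ∑ x ∈ H, t * #(A.filter (q · = x)) := by
        rw [← smul_eq_mul]
        exact card_nsmul_le_sum _ _ _ fun x hx => (mem_filter.1 hx).2.le
    _ = t * ∑ x ∈ H, #(A.filter (q · = x)) := by rw [mul_sum]
    _ ≤ t * #A := Nat.mul_le_mul_left t hsum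

lemma pr_le_of_forall_mem [Nonempty α] {P : α → Prop} {s : Finset α} {δ : ℝ}
    (hP : ∀ a, P a → a ∈ s) (hs : (#s : ℝ) ≤ δ * Fintype.card α) : pr P ≤ δ := by
  rw [pr, div_le_iff₀ (by exact_mod_cast Fintype.card_pos)]
  exact le_trans (by exact_mod_cast card_le_card fun a ha => hP a (mem_filter.1 ha).2) hs

lemma exists_not_of_pr_lt_one [Nonempty α] {P : α → Prop} (h : pr P < 1) : ∃ a, ¬ P a := by
  by_contra! hP
  have hcard : (Fintype.card α : ℝ) ≠ 0 := Nat.cast_ne_zero.2 Fintype.card_ne_zero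
  simp [pr, filter_true_of_mem fun a _ => hP a, hcard] at h

end Counting

section Adversary

variable {α β : Type*} [Fintype α] {d : ℕ}

noncomputable def scaledIndex (c : ℝ) (x : α) : ℝ :=
  c * (Fintype.equivFin α x : ℕ) / Fintype.card α

lemma scaledIndex_mem_Ico {c : ℝ} (hc : 0 < c) (x : α) : scaledIndex c x ∈ Set.Ico 0 c := by
  have hcard : (0 : ℝ) < Fintype.card α := by
    exact_mod_cast Fintype.card_pos_iff.2 ⟨x⟩
  have hlt : ((Fintype.equivFin α x : ℕ) : ℝ) < Fintype.card α := by
    exact_mod_cast (Fintype.equivFin α x).isLt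
  refine ⟨by unfold scaledIndex; positivity, ?_⟩
  rw [scaledIndex, div_lt_iff₀ hcard]
  exact mul_lt_mul_of_pos_left hlt hc

lemma scaledIndex_injective {c : ℝ} (hc : c ≠ 0) : Function.Injective (scaledIndex c : α → ℝ) := by
  intro x y h
  have hcard : (Fintype.card α : ℝ) ≠ 0 := Nat.cast_ne_zero.2 (Fintype.card_pos_iff.2 ⟨x⟩).ne'
  simp only [scaledIndex, div_left_inj' hcard, mul_right_inj' hc, Nat.cast_inj] at h
  exact (Fintype.equivFin α).injective (Fin.ext h)

/-- A query in a heavy fibre makes the steward fail (`|v| > ε'`); any other query is revealed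
by the answer. -/
noncomputable def adversaryFn (c v : ℝ) (t : ℕ) (A : Finset β) (q : β → α) (x : α) :
    Fin d → ℝ :=
  fun _ => if x ∈ heavyFibers t A q then v else scaledIndex c x

variable {c v : ℝ} {t : ℕ} {A : Finset β} {q : β → α}

lemma eq_of_adversaryFn_eq (hd : 0 < d) (hc : 0 < c) (hv : c ≤ v) {x y : α}
    (hx : x ∉ heavyFibers t A q)
    (h : (adversaryFn c v t A q y : Fin d → ℝ) = adversaryFn c v t A q x) :
    y = x := by
  have h0 := congrFun h ⟨0, hd⟩
  simp only [adversaryFn, if_neg hx] at h0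
  split_ifs at h0 with hy
  · exact absurd (h0 ▸ scaledIndex_mem_Ico hc x).2 hv.not_gt
  · exact scaledIndex_injective hc.ne' h0

lemma concentrated_adversaryFn {n : ℕ} {ε δ : ℝ} {A : Finset β} {q : β → Fin n → Bool}
    (hc : 0 < c) (hcε : c ≤ ε) (ht : t ≤ δ * 2 ^ n) :
    Concentrated n d ε δ (adversaryFn c v t A q) 0 := by
  refine pr_le_of_forall_mem (s := heavyFibers t A q) (fun x ⟨j, hj⟩ => ?_) ?_
  · by_contra hx
    have hmem := scaledIndex_mem_Ico hc x
    simp only [adversaryFn, if_neg hx, Pi.zero_apply, sub_zero, abs_of_nonneg hmem.1] at hj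
    linarith [hmem.2]
  · simpa using (Nat.cast_le.2 (card_heavyFibers_le t A q)).trans ht

end Adversary

def Steward.IsPRG {n k d m : ℕ} (S : Steward n k d m) : Prop :=
  ∀ Z Ws W, S.r Z Ws W = W

section Interaction

variable {n k d m : ℕ} {ε δ : ℝ}

noncomputable def hist (O : Owner n k d ε δ) (S : Steward n k d m) (Z : Fin m → Bool) (i : ℕ) :
    List (Fin d → ℝ) :=
  (run O S Z i).map (·.1)

variable (O : Owner n k d ε δ) {S : Steward n k d m} (Z : Fin m → Bool)

lemma run_succ_of_isPRG (hS : S.IsPRG) (i : ℕ) :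
    run O S Z (i + 1) = run O S Z i ++
      [((O.act (hist O S Z i)).1 (S.q Z (hist O S Z i)),
        (O.act (hist O S Z i)).1 (S.q Z (hist O S Z i)),
        (O.act (hist O S Z i)).2)] := by
  have hanswers : ∀ i, (run O S Z i).map (·.2.1) = hist O S Z i := by
    intro i
    induction i with
    | zero => rfl
    | succ i ih =>
      simp only [hist] at ih ⊢
      simp only [run, List.map_append, List.map_cons, List.map_nil, ih]
      rw [hS]
  rw [run, hanswers, hS]
  rfl

lemma hist_succ_of_isPRG (hS : S.IsPRG) (i : ℕ) :
    hist O S Z (i + 1) = hist O S Z i ++ [(O.act (hist O S Z i)).1 (S.q Z (hist O S Z i))] := by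
  rw [hist, run_succ_of_isPRG O Z hS, List.map_append]
  rfl

end Interaction

section ConsistentSeeds

variable {n k d m : ℕ} (S : Steward n k d m) (c v : ℝ) (t : ℕ)

/-- Indexed by the reversed history, so that the recursion peels off the last response. -/
noncomputable def consistentRev : List (Fin d → ℝ) → Finset (Fin m → Bool)
  | [] => univ
  | w :: l => (consistentRev l).filter fun Z =>
      adversaryFn c v t (consistentRev l) (fun Z' => S.q Z' l.reverse) (S.q Z l.reverse) = w

/-- The seeds `Z` under which the adversary's responses so far would have been `ys`. -/
noncomputable def consistent (ys : List (Fin d → ℝ)) : Finset (Fin m → Bool) :=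
  consistentRev S c v t ys.reverse

lemma consistent_append_singleton (ys : List (Fin d → ℝ)) (w : Fin d → ℝ) :
    consistent S c v t (ys ++ [w]) = (consistent S c v t ys).filter fun Z =>
      adversaryFn c v t (consistent S c v t ys) (fun Z' => S.q Z' ys) (S.q Z ys) = w := by
  simp only [consistent, List.reverse_append, List.reverse_singleton, List.singleton_append,
    consistentRev, List.reverse_reverse]
  congr

noncomputable def adversary {ε δ : ℝ} (hc : 0 < c) (hcε : c ≤ ε) (ht : t ≤ δ * 2 ^ n) :
    Owner n k d ε δ where
  act ys := (adversaryFn c v t (consistent S c v t ys) (fun Z => S.q Z ys), 0)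
  conc _ _ := concentrated_adversaryFn hc hcε ht

end ConsistentSeeds

section AdversaryRun

variable {n k d m : ℕ} {S : Steward n k d m} {c v ε δ ε' : ℝ} {t : ℕ}
  (hc : 0 < c) (hcε : c ≤ ε) (ht : (t : ℝ) ≤ δ * 2 ^ n)

lemma mem_consistent_hist (hS : S.IsPRG) (Z : Fin m → Bool) (i : ℕ) :
    Z ∈ consistent S c v t (hist (adversary (k := k) S c v t hc hcε ht) S Z i) := by
  induction i with
  | zero => exact mem_univ Z
  | succ i ih =>
    rw [hist_succ_of_isPRG _ Z hS, consistent_append_singleton]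
    exact mem_filter.2 ⟨ih, rfl⟩

lemma query_not_mem_heavyFibers (hS : S.IsPRG) (hd : 0 < d) (hv : ε' < v)
    (Z : Fin m → Bool) (i : ℕ)
    (hacc : ∀ p ∈ run (adversary S c v t hc hcε ht) S Z (i + 1), ∀ j, |p.1 j - p.2.2 j| ≤ ε') :
    let ys := hist (adversary S c v t hc hcε ht) S Z i
    S.q Z ys ∉ heavyFibers t (consistent S c v t ys) (S.q · ys) := by
  intro ys hheavy
  rw [run_succ_of_isPRG _ Z hS] at hacc
  have hlast := hacc _ (List.mem_append_right _ (List.mem_singleton_self _)) ⟨0, hd⟩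
  change |adversaryFn c v t (consistent S c v t ys) (S.q · ys) (S.q Z ys) ⟨0, hd⟩ - 0| ≤ ε'
    at hlast
  simp only [adversaryFn, if_pos hheavy, sub_zero] at hlast
  exact (hlast.trans_lt hv).not_ge (le_abs_self v)

lemma consistent_hist_succ_subset (hS : S.IsPRG) (hd : 0 < d) (hv : c ≤ v)
    (Z : Fin m → Bool) (i : ℕ)
    (hlight : let ys := hist (adversary (k := k) S c v t hc hcε ht) S Z i
      S.q Z ys ∉ heavyFibers t (consistent S c v t ys) (S.q · ys)) :
    let ys := hist (adversary (k := k) S c v t hc hcε ht) S Z i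
    consistent S c v t (hist (adversary S c v t hc hcε ht) S Z (i + 1)) ⊆
      (consistent S c v t ys).filter (S.q · ys = S.q Z ys) := by
  intro ys
  rw [hist_succ_of_isPRG _ Z hS, consistent_append_singleton]
  intro Z' hZ'
  rw [mem_filter] at hZ' ⊢
  exact ⟨hZ'.1, eq_of_adversaryFn_eq hd hc hv hlight hZ'.2⟩

lemma card_consistent_hist_mul_pow_le (hS : S.IsPRG) (hd : 0 < d) (hcv : c ≤ v) (hv : ε' < v)
    (Z : Fin m → Bool) (i : ℕ)
    (hacc : ∀ p ∈ run (adversary S c v t hc hcε ht) S Z i, ∀ j, |p.1 j - p.2.2 j| ≤ ε') :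
    #(consistent S c v t (hist (adversary S c v t hc hcε ht) S Z i)) * t ^ i ≤ 2 ^ m := by
  induction i with
  | zero => simpa using card_le_univ (consistent S c v t (hist _ S Z 0))
  | succ i ih =>
    set ys := hist (adversary S c v t hc hcε ht) S Z i
    have hlight := query_not_mem_heavyFibers hc hcε ht hS hd hv Z i hacc
    have hfibre : t * #((consistent S c v t ys).filter (S.q · ys = S.q Z ys)) ≤
        #(consistent S c v t ys) := by
      simpa [heavyFibers] using hlight
    calc #(consistent S c v t (hist (adversary S c v t hc hcε ht) S Z (i + 1))) * t ^ (i + 1)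
        ≤ #((consistent S c v t ys).filter (S.q · ys = S.q Z ys)) * t * t ^ i := by
          rw [pow_succ', ← mul_assoc]
          gcongr
          exact consistent_hist_succ_subset hc hcε ht hS hd hcv Z i hlight
      _ ≤ #(consistent S c v t ys) * t ^ i := by
          rw [mul_comm _ t]
          gcongr
      _ ≤ 2 ^ m := by
          refine ih fun p hp => hacc p ?_
          rw [run_succ_of_isPRG _ Z hS]
          exact List.mem_append_left _ hp

lemma pow_le_two_pow_of_forall_mem_run (hS : S.IsPRG) (hd : 0 < d) (hcv : c ≤ v)
    (hv : ε' < v) (Z : Fin m → Bool) (i : ℕ)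
    (hacc : ∀ p ∈ run (adversary S c v t hc hcε ht) S Z i, ∀ j, |p.1 j - p.2.2 j| ≤ ε') :
    t ^ i ≤ 2 ^ m :=
  calc t ^ i ≤ #(consistent S c v t (hist (adversary S c v t hc hcε ht) S Z i)) * t ^ i :=
        Nat.le_mul_of_pos_left _ (card_pos.2 ⟨Z, mem_consistent_hist hc hcε ht hS Z i⟩)
    _ ≤ 2 ^ m := card_consistent_hist_mul_pow_le hc hcε ht hS hd hcv hv Z i hacc

end AdversaryRun

open Real in
lemma sub_logb_mul_le_of_floor_pow_le {n k m : ℕ} {δ : ℝ} (hδ : 0 < δ)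
    (hpos : 0 < n - logb 2 (2 / δ)) (hpow : ⌊δ * 2 ^ n⌋₊ ^ k ≤ 2 ^ m) :
    (n - logb 2 (2 / δ)) * k ≤ m := by
  have hhalf : n - logb 2 (2 / δ) = logb 2 (δ * 2 ^ n / 2) := by
    rw [logb_div (by positivity) two_ne_zero, logb_div two_ne_zero hδ.ne',
      logb_mul hδ.ne' (by positivity), logb_pow, logb_self_eq_one one_lt_two]
    ring
  have hlarge : 1 < δ * 2 ^ n / 2 := by
    rwa [hhalf, logb_pos_iff one_lt_two (by positivity)] at hpos
  have hfloor : δ * 2 ^ n / 2 ≤ ⌊δ * 2 ^ n⌋₊ := (Nat.div_two_lt_floor (by linarith)).le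
  have ht0 : (0 : ℝ) < ⌊δ * 2 ^ n⌋₊ := by linarith
  calc (n - logb 2 (2 / δ)) * k ≤ logb 2 ⌊δ * 2 ^ n⌋₊ * k := by
        rw [hhalf]
        exact mul_le_mul_of_nonneg_right (logb_le_logb_of_le one_lt_two (by positivity) hfloor)
          k.cast_nonneg
    _ = logb 2 ((⌊δ * 2 ^ n⌋₊ : ℝ) ^ k) := by rw [logb_pow, mul_comm]
    _ ≤ logb 2 (2 ^ m) := logb_le_logb_of_le one_lt_two (pow_pos ht0 k) (by exact_mod_cast hpow)
    _ = m := by rw [logb_pow, logb_self_eq_one one_lt_two, mul_one]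

theorem prg_steward_lower_bound (n k d m : ℕ) (hd : 0 < d)
    (ε ε' δ δ' : ℝ) (hε : 0 < ε) (hδ : 0 < δ)
    (hδ'0 : 0 ≤ δ') (hδ'1 : δ' ≤ 1)
    (S : Steward n k d m)
    (hpg : ∀ Z Ws W, S.r Z Ws W = W)
    (hS : IsSteward n k d m ε δ ε' δ' S) :
    (1 - δ') * ((n : ℝ) - Real.logb 2 (2 / δ)) * k ≤ m := by
  rcases le_or_gt ((n : ℝ) - Real.logb 2 (2 / δ)) 0 with hC | hC
  · calc (1 - δ') * ((n : ℝ) - Real.logb 2 (2 / δ)) * k ≤ 0 :=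
          mul_nonpos_of_nonpos_of_nonneg (mul_nonpos_of_nonneg_of_nonpos (by linarith) hC)
            k.cast_nonneg
      _ ≤ m := m.cast_nonneg
  rcases hδ'1.lt_or_eq with hδ'1 | rfl
  · have ht : (⌊δ * 2 ^ n⌋₊ : ℝ) ≤ δ * 2 ^ n := Nat.floor_le (by positivity)
    obtain ⟨Z, hZ⟩ := exists_not_of_pr_lt_one
      ((hS (adversary S ε (ε + |ε'|) _ hε le_rfl ht)).trans_lt hδ'1)
    push Not at hZ
    have hpow := pow_le_two_pow_of_forall_mem_run hε le_rfl ht hpg hd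
      (by linarith [abs_nonneg ε']) (by linarith [le_abs_self ε']) Z k hZ
    calc (1 - δ') * ((n : ℝ) - Real.logb 2 (2 / δ)) * k
        ≤ ((n : ℝ) - Real.logb 2 (2 / δ)) * k :=
          mul_le_mul_of_nonneg_right (mul_le_of_le_one_left hC.le (by linarith)) k.cast_nonneg
      _ ≤ m := sub_logb_mul_le_of_floor_pow_le hδ hC hpow
  · simp
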